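/- Let C be a convolutional code with column distances d_j^c. Suppose a codeword v(z) = Σ_{i=0}^s v_i z^i is received with ε_i erased components in coefficient v_i. If for each 0 ≤ i ≤ s there exists j ∈ ℕ₀ such that ε_i + ε_{i+1} + ⋯ + ε_{i+j} ≤ d_j^c − 1 (with ε_l = 0 for l > s), then all erasures can be recovered (the codeword is uniquely determined by its unerased components, given left-to-right recovery). -/

import Mathlib

/-!
A right prime generator matrix `G` has an injective constant term `G(0)`: a nonzero `c` with
`G(0) c = 0` would let a unimodular column operation make one column of `G` divisible by `z`,
producing a factorisation of `G` through the non-unit `diag(z, 1, …, 1)`. Hence a codeword whose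
first `i` coefficients vanish is `z^i` times a codeword. Decoding left to right, once the
coefficients before `i` are known, the difference of two candidate codewords is such a shifted
codeword; its window of length `j + 1` starting at `i` carries fewer than `d_j^c` nonzero
entries, so by definition of the column distance its `i`-th coefficient vanishes.
-/

open Polynomial Matrix

/-- The `j`-th column distance of a convolutional code `C ⊆ F[z]^n`. -/
noncomputable def colDist {F : Type*} [Field F] [DecidableEq F] {n : ℕ}
    (C : Submodule (Polynomial F) (Fin n → Polynomial F)) (j : ℕ) : ℕ :=
  sInf { d : ℕ | ∃ v ∈ C, (fun b => (v b).coeff 0) ≠ (0 : Fin n → F) ∧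
    d = ∑ t ∈ Finset.range (j + 1), hammingNorm (fun b => (v b).coeff t) }

/-- Right primeness of a polynomial matrix. -/
def RightPrime {F : Type*} [Field F] {n k : ℕ}
    (G : Matrix (Fin n) (Fin k) (Polynomial F)) : Prop :=
  ∀ (B : Matrix (Fin n) (Fin k) (Polynomial F))
    (X : Matrix (Fin k) (Fin k) (Polynomial F)), G = B * X → IsUnit X

/-- Noncatastrophic `(n,k)` convolutional code: admits a right prime generator matrix. -/
def IsNoncatastrophic {F : Type*} [Field F] {n : ℕ} (k : ℕ)
    (C : Submodule (Polynomial F) (Fin n → Polynomial F)) : Prop :=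
  ∃ G : Matrix (Fin n) (Fin k) (Polynomial F),
    Function.Injective G.mulVecLin ∧ LinearMap.range G.mulVecLin = C ∧ RightPrime G

theorem hammingNorm_le_card_of_ne_zero_mem {ι β : Type*} [Fintype ι] [Zero β] [DecidableEq β]
    {x : ι → β} {s : Finset ι} (h : ∀ i, x i ≠ 0 → i ∈ s) : hammingNorm x ≤ s.card :=
  Finset.card_le_card fun i hi => h i (Finset.mem_filter.mp hi).2

theorem Matrix.exists_eq_mul_diagonal_mulSingle_of_dvd {R m n : Type*} [CommSemiring R]
    [Fintype n] [DecidableEq n] (A : Matrix m n R) (p : n) (a : R) (h : ∀ i, a ∣ A i p) :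
    ∃ B : Matrix m n R, A = B * diagonal (Pi.mulSingle p a) := by
  choose q hq using h
  refine ⟨A.updateCol p q, ?_⟩
  ext i j
  rw [mul_diagonal]
  by_cases hj : j = p
  · subst hj
    simp [hq, mul_comm]
  · simp [hj]

section ConvolutionalCode

variable {F : Type*} [Field F] {n k : ℕ}

theorem RightPrime.eq_zero_of_mulVec_coeff_zero {G : Matrix (Fin n) (Fin k) F[X]}
    (hG : RightPrime G) {c : Fin k → F} (hc : (G.map (coeff · 0)).mulVec c = 0) : c = 0 := by
  by_contra hne
  obtain ⟨p, hp⟩ := Function.ne_iff.mp hne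
  set T : Matrix (Fin k) (Fin k) F[X] := (1 : Matrix (Fin k) (Fin k) F[X]).updateCol p (C ∘ c)
  have hT : T.det = C (c p) := by
    rw [← cramer_apply, cramer_one]
    simp
  have hTunit : IsUnit T.det := hT ▸ isUnit_C.mpr (isUnit_iff_ne_zero.mpr hp)
  have hdvd : ∀ i, X ∣ (G * T) i p := fun i => by
    simpa [X_dvd_iff, T, mul_apply, updateCol_apply, mulVec, dotProduct, coeff_mul_C]
      using congrFun hc i
  obtain ⟨B, hB⟩ := (G * T).exists_eq_mul_diagonal_mulSingle_of_dvd p X hdvd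
  have hfactor : G = B * (diagonal (Pi.mulSingle p X) * T⁻¹) := by
    rw [← Matrix.mul_assoc, ← hB, mul_nonsing_inv_cancel_right _ _ hTunit]
  have hunit := (isUnit_iff_isUnit_det _).mp (hG _ _ hfactor)
  rw [det_mul, det_diagonal, Finset.prod_pi_mulSingle', if_pos (Finset.mem_univ p)] at hunit
  exact not_isUnit_X (isUnit_of_mul_isUnit_left hunit)

variable {C : Submodule F[X] (Fin n → F[X])}

theorem IsNoncatastrophic.exists_eq_X_smul (hC : IsNoncatastrophic k C)
    {u : Fin n → F[X]} (hu : u ∈ C) (h0 : ∀ b, (u b).coeff 0 = 0) :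
    ∃ u' ∈ C, u = (X : F[X]) • u' := by
  obtain ⟨G, -, rfl, hG⟩ := hC
  obtain ⟨m, rfl⟩ := hu
  have hm0 : (fun j => (m j).coeff 0) = 0 := hG.eq_zero_of_mulVec_coeff_zero <| funext fun i => by
    simpa [mulVec, dotProduct, finsetSum_coeff, mul_coeff_zero] using h0 i
  choose m' hm' using fun j => X_dvd_iff.mpr (congrFun hm0 j)
  refine ⟨G.mulVecLin m', ⟨m', rfl⟩, ?_⟩
  rw [show m = (X : F[X]) • m' from funext hm', map_smul]

theorem IsNoncatastrophic.exists_eq_X_pow_smul (hC : IsNoncatastrophic k C) :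
    ∀ (i : ℕ) {u : Fin n → F[X]}, u ∈ C → (∀ l < i, ∀ b, (u b).coeff l = 0) →
      ∃ u' ∈ C, u = (X ^ i : F[X]) • u'
  | 0, u, hu, _ => ⟨u, hu, (one_smul _ _).symm⟩
  | i + 1, u, hu, hlow => by
    obtain ⟨w, hw, rfl⟩ := hC.exists_eq_X_smul hu (hlow 0 i.succ_pos)
    obtain ⟨u', hu', rfl⟩ := hC.exists_eq_X_pow_smul i hw fun l hl b => by
      simpa [coeff_X_mul] using hlow (l + 1) (by omega) b
    exact ⟨u', hu', by rw [smul_smul, pow_succ']⟩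

theorem colDist_le_sum_hammingNorm [DecidableEq F] {v : Fin n → F[X]} (hv : v ∈ C)
    (h0 : (fun b => (v b).coeff 0) ≠ 0) (j : ℕ) :
    colDist C j ≤ ∑ t ∈ Finset.range (j + 1), hammingNorm (fun b => (v b).coeff t) :=
  Nat.sInf_le ⟨v, hv, h0, rfl⟩

theorem IsNoncatastrophic.coeff_eq_zero_of_sum_card_lt_colDist [DecidableEq F]
    (hC : IsNoncatastrophic k C) (E : ℕ → Finset (Fin n)) {u : Fin n → F[X]} (hu : u ∈ C)
    (hE : ∀ l b, (u b).coeff l ≠ 0 → b ∈ E l) {i j : ℕ}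
    (hlow : ∀ l < i, ∀ b, (u b).coeff l = 0)
    (hj : ∑ l ∈ Finset.range (j + 1), (E (i + l)).card < colDist C j) (b : Fin n) :
    (u b).coeff i = 0 := by
  by_contra hb
  obtain ⟨u', hu', rfl⟩ := hC.exists_eq_X_pow_smul i hu hlow
  have hshift : ∀ t b, (((X ^ i : F[X]) • u') b).coeff (i + t) = (u' b).coeff t := by
    simp [coeff_X_pow_mul']
  have h0 : (fun b => (u' b).coeff 0) ≠ 0 := fun h =>
    hb (by simpa using (hshift 0 b).trans (congrFun h b))
  refine hj.not_ge ?_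
  calc colDist C j ≤ ∑ t ∈ Finset.range (j + 1), hammingNorm (fun b => (u' b).coeff t) :=
        colDist_le_sum_hammingNorm hu' h0 j
    _ ≤ ∑ t ∈ Finset.range (j + 1), (E (i + t)).card :=
        Finset.sum_le_sum fun t _ => hammingNorm_le_card_of_ne_zero_mem fun b hb' =>
          hE (i + t) b (by rwa [hshift])

end ConvolutionalCode

/-- Let `C` be a (noncatastrophic) convolutional code with column distances
`d_j^c`, and suppose a codeword of degree at most `s` is received with erasure pattern
`E i ⊆ Fin n` in coefficient `v_i` (so `ε_i = |E i|`, with `E i = ∅` for `i > s`). If for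
every `0 ≤ i ≤ s` there is `j` with `ε_i + ⋯ + ε_{i+j} ≤ d_j^c − 1`, then all erasures can
be recovered: any two codewords agreeing on all non-erased components are equal. -/
theorem full_recovery_of_erasures {F : Type*} [Field F] [DecidableEq F] {n k s : ℕ}
    (C : Submodule (Polynomial F) (Fin n → Polynomial F))
    (hC : IsNoncatastrophic k C)
    (E : ℕ → Finset (Fin n))
    (hEsupp : ∀ i : ℕ, s < i → E i = ∅)
    (hcond : ∀ i ≤ s, ∃ j : ℕ,
      (∑ l ∈ Finset.range (j + 1), (E (i + l)).card) < colDist C j) :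
    ∀ v ∈ C, ∀ w ∈ C,
      (∀ (i : ℕ) (b : Fin n), b ∉ E i → (v b).coeff i = (w b).coeff i) → v = w := by
  intro v hv w hw hagree
  have hsupp : ∀ l b, ((v - w) b).coeff l ≠ 0 → b ∈ E l := fun l b h => by
    by_contra hb
    exact h (by simp [hagree l b hb])
  have hcoeff : ∀ i b, ((v - w) b).coeff i = 0 := by
    intro i
    induction i using Nat.strong_induction_on with
    | _ i ih =>
      rcases le_or_gt i s with his | his
      · obtain ⟨j, hj⟩ := hcond i his
        exact hC.coeff_eq_zero_of_sum_card_lt_colDist E (C.sub_mem hv hw) hsupp ih hj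
      · intro b
        by_contra hb
        simpa [hEsupp i his] using hsupp i b hb
  exact sub_eq_zero.mp (funext fun b => Polynomial.ext fun i => hcoeff i b)
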